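/- arXiv:2503.01441 — 5 statements merged into one kernel-verified Lean document; each statement's English description precedes it below -/
import Mathlib

section
/- Let X be an n×n real symmetric positive semidefinite matrix, let v be a vector in the image (column space) of X, and let λ be a scalar with 0 ≤ λ ≤ (vᵀX†v)⁻¹, where X† denotes the Moore–Penrose pseudoinverse of X. Then the matrix Y = X − λ v vᵀ is positive semidefinite. -/
/-!
Write `v = X w`. Cauchy–Schwarz for the semi-inner product `⟪x, y⟫ = xᵀ X y` gives
`(vᵀx)² = ⟪w, x⟫² ≤ ⟪w, w⟫ ⟪x, x⟫`, and `⟪w, w⟫ = wᵀ X X† X w = vᵀ X† v`. Hence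
`xᵀ Y x = xᵀ X x - λ (vᵀx)² ≥ (1 - λ vᵀX†v) xᵀ X x ≥ 0`.
-/

open Matrix

/-- `Xd` is the Moore–Penrose pseudoinverse of `X`. -/
def IsMoorePenroseInv {n : ℕ} (X Xd : Matrix (Fin n) (Fin n) ℝ) : Prop :=
  X * Xd * X = X ∧ Xd * X * Xd = Xd ∧ (X * Xd)ᵀ = X * Xd ∧ (Xd * X)ᵀ = Xd * X

namespace Matrix

variable {m : Type*} [Fintype m]

theorem PosSemidef.dotProduct_mulVec_sq_le {A : Matrix m m ℝ} (hA : A.PosSemidef)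
    (x y : m → ℝ) : (x ⬝ᵥ A *ᵥ y) ^ 2 ≤ (x ⬝ᵥ A *ᵥ x) * (y ⬝ᵥ A *ᵥ y) := by
  let := A.toSeminormedAddCommGroup hA
  let := A.toInnerProductSpace hA
  have inner_eq (a b : m → ℝ) : inner ℝ a b = a ⬝ᵥ A *ᵥ b := dotProduct_comm _ _
  simpa only [sq, inner_eq] using real_inner_mul_inner_self_le x y

theorem IsHermitian.mulVec_dotProduct {A : Matrix m m ℝ} (hA : A.IsHermitian) (x y : m → ℝ) :
    A *ᵥ x ⬝ᵥ y = x ⬝ᵥ A *ᵥ y := by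
  conv_rhs =>
    rw [dotProduct_mulVec, ← mulVec_transpose, ← conjTranspose_eq_transpose_of_trivial, hA.eq]

theorem dotProduct_sub_smul_vecMulVec_self_mulVec (A : Matrix m m ℝ) (v x : m → ℝ) (l : ℝ) :
    x ⬝ᵥ (A - l • vecMulVec v v) *ᵥ x = x ⬝ᵥ A *ᵥ x - l * (v ⬝ᵥ x) ^ 2 := by
  rw [sub_mulVec, smul_mulVec, vecMulVec_mulVec, dotProduct_sub, dotProduct_smul,
    op_smul_eq_smul, dotProduct_smul, dotProduct_comm x v, smul_eq_mul, smul_eq_mul, sq]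

theorem PosSemidef.sub_smul_vecMulVec_mulVec_self {A : Matrix m m ℝ} (hA : A.PosSemidef)
    (w : m → ℝ) {l : ℝ} (hl0 : 0 ≤ l) (hl : l * (w ⬝ᵥ A *ᵥ w) ≤ 1) :
    (A - l • vecMulVec (A *ᵥ w) (A *ᵥ w)).PosSemidef := by
  refine .of_dotProduct_mulVec_nonneg
    (hA.isHermitian.sub ((posSemidef_vecMulVec_self_star _).isHermitian.smul
      (IsSelfAdjoint.all l))) fun x => ?_
  rw [star_trivial, dotProduct_sub_smul_vecMulVec_self_mulVec, hA.isHermitian.mulVec_dotProduct,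
    sub_nonneg]
  have hx : 0 ≤ x ⬝ᵥ A *ᵥ x := by simpa using hA.dotProduct_mulVec_nonneg x
  calc l * (w ⬝ᵥ A *ᵥ x) ^ 2
      ≤ l * ((w ⬝ᵥ A *ᵥ w) * (x ⬝ᵥ A *ᵥ x)) := by gcongr; exact hA.dotProduct_mulVec_sq_le w x
    _ = (l * (w ⬝ᵥ A *ᵥ w)) * (x ⬝ᵥ A *ᵥ x) := by ring
    _ ≤ x ⬝ᵥ A *ᵥ x := mul_le_of_le_one_left hx hl

end Matrix

theorem IsMoorePenroseInv.mulVec_dotProduct_mulVec_mulVec {n : ℕ}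
    {X Xd : Matrix (Fin n) (Fin n) ℝ} (hXd : IsMoorePenroseInv X Xd) (hX : X.IsHermitian)
    (w : Fin n → ℝ) : X *ᵥ w ⬝ᵥ Xd *ᵥ (X *ᵥ w) = w ⬝ᵥ X *ᵥ w := by
  rw [hX.mulVec_dotProduct, mulVec_mulVec, mulVec_mulVec, hXd.1]

theorem stmt0 {n : ℕ} (X Xd : Matrix (Fin n) (Fin n) ℝ) (v : Fin n → ℝ) (l : ℝ)
    (hX : X.PosSemidef) (hXd : IsMoorePenroseInv X Xd)
    (hv : ∃ w, X.mulVec w = v) (hpos : 0 < v ⬝ᵥ Xd.mulVec v)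
    (hl0 : 0 ≤ l) (hl1 : l ≤ (v ⬝ᵥ Xd.mulVec v)⁻¹) :
    (X - l • vecMulVec v v).PosSemidef := by
  obtain ⟨w, rfl⟩ := hv
  rw [hXd.mulVec_dotProduct_mulVec_mulVec hX.isHermitian] at hpos hl1
  refine hX.sub_smul_vecMulVec_mulVec_self w hl0 ?_
  rwa [← one_div, le_div_iff₀ hpos] at hl1
end

section
/- Let X be an n×n real symmetric positive semidefinite matrix, let v be a nonzero vector in the image of X, and set λ = (vᵀX†v)⁻¹. Then Y = X − λ v vᵀ satisfies rank(Y) < rank(X); in particular the vector X†v lies in the kernel of Y. -/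
open Matrix

lemma vecMulVec_mulVec' {n : ℕ} (v w u : Fin n → ℝ) :
    (vecMulVec v w).mulVec u = (w ⬝ᵥ u) • v := by
  funext i
  simp only [vecMulVec_apply, mulVec, dotProduct, Pi.smul_apply, smul_eq_mul, Finset.mul_sum]
  rw [Finset.sum_mul]
  exact Finset.sum_congr rfl fun j _ => by ring

theorem stmt1 {n : ℕ} (X Xd : Matrix (Fin n) (Fin n) ℝ) (v : Fin n → ℝ)
    (hX : X.PosSemidef) (hXd : IsMoorePenroseInv X Xd)
    (hv : ∃ w, X.mulVec w = v) (hvne : v ≠ 0) :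
    (X - (v ⬝ᵥ Xd.mulVec v)⁻¹ • vecMulVec v v).rank < X.rank ∧
    (X - (v ⬝ᵥ Xd.mulVec v)⁻¹ • vecMulVec v v).mulVec (Xd.mulVec v) = 0 := by
  obtain ⟨w, hw⟩ := hv
  set u : Fin n → ℝ := Xd.mulVec v with hu
  set c : ℝ := v ⬝ᵥ u with hc
  have hXsymm : Xᵀ = X := hX.1
  -- X *ᵥ u = v
  have hXu : X.mulVec u = v := by
    rw [hu, ← hw, mulVec_mulVec, mulVec_mulVec, hXd.1, hw]
  -- c = u ⬝ᵥ X u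
  have hcx : c = u ⬝ᵥ X.mulVec u := by
    rw [hc, ← hXu, dotProduct_comm]
  have hcne : c ≠ 0 := by
    intro h0
    have : X.mulVec u = 0 := by
      rw [← hX.dotProduct_mulVec_zero_iff u, star_trivial, ← hcx]
      exact h0
    exact hvne (hXu ▸ this)
  set Y : Matrix (Fin n) (Fin n) ℝ := X - c⁻¹ • vecMulVec v v with hY
  have hYu : Y.mulVec u = 0 := by
    rw [hY, sub_mulVec, smul_mulVec, vecMulVec_mulVec', hXu, ← hc, smul_smul,
      inv_mul_cancel₀ hcne, one_smul, sub_self]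
  refine ⟨?_, hYu⟩
  -- kernel inclusion
  have hker : ∀ z, X.mulVec z = 0 → Y.mulVec z = 0 := by
    intro z hz
    have hvz : v ⬝ᵥ z = 0 := by
      rw [← hXu, dotProduct_comm, dotProduct_mulVec, ← hXsymm, vecMul_transpose, hz]
      simp
    rw [hY, sub_mulVec, smul_mulVec, vecMulVec_mulVec', hvz, hz]
    simp
  have hker' : LinearMap.ker X.mulVecLin < LinearMap.ker Y.mulVecLin := by
    constructor
    · intro z hz
      exact hker z hz
    · intro hsub
      have hu' : u ∈ LinearMap.ker Y.mulVecLin := hYu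
      have : X.mulVec u = 0 := hsub hu'
      exact hvne (hXu ▸ this)
  have hdim : Module.finrank ℝ (LinearMap.ker X.mulVecLin) <
      Module.finrank ℝ (LinearMap.ker Y.mulVecLin) :=
    Submodule.finrank_lt_finrank_of_lt hker'
  have h1 := LinearMap.finrank_range_add_finrank_ker X.mulVecLin
  have h2 := LinearMap.finrank_range_add_finrank_ker Y.mulVecLin
  have hfr : Module.finrank ℝ (Fin n → ℝ) = Module.finrank ℝ (Fin n → ℝ) := rfl
  rw [Matrix.rank, Matrix.rank]
  omega
end

section
/- Let u, w, z be vectors in ℝⁿ with z, w orthonormal, and for τ, τ' ∈ [0,1] define u = τ z + √(1−τ²) w and u' = τ' z + √(1−τ'²) w. Then ‖u' u'ᵀ − u uᵀ‖_F² = 2(1 − (uᵀu')²) and 1 − (uᵀu')² ≤ (τ−τ')² + 2τ²τ'(τ−τ') whenever τ' ≤ τ. -/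
open Matrix

lemma trace_aux {n : ℕ} (a b : Fin n → ℝ) :
    ((vecMulVec a a - vecMulVec b b)ᵀ * (vecMulVec a a - vecMulVec b b)).trace
      = (a ⬝ᵥ a)*(a ⬝ᵥ a) - 2*((a ⬝ᵥ b)*(a ⬝ᵥ b)) + (b ⬝ᵥ b)*(b ⬝ᵥ b) := by
  simp only [Matrix.trace, Matrix.diag, Matrix.mul_apply, Matrix.transpose_apply,
    Matrix.sub_apply, Matrix.vecMulVec_apply, dotProduct]
  have : ∀ y, ∑ x, (a x * a y - b x * b y) * (a x * a y - b x * b y)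
      = (a y * a y) * (∑ x, a x * a x) - (2*(a y * b y)) * (∑ x, a x * b x)
        + (b y * b y) * (∑ x, b x * b x) := by
    intro y
    simp only [Finset.mul_sum, ← Finset.sum_sub_distrib, ← Finset.sum_add_distrib]
    exact Finset.sum_congr rfl fun x _ => by ring
  simp only [this, Finset.sum_add_distrib, Finset.sum_sub_distrib, ← Finset.sum_mul]
  simp only [← Finset.mul_sum, pow_two]
  ring

theorem stmt11 {n : ℕ} (z w : Fin n → ℝ) (hz : z ⬝ᵥ z = 1) (hw : w ⬝ᵥ w = 1)
    (hzw : z ⬝ᵥ w = 0) (τ τ' : ℝ) (hτ'0 : 0 ≤ τ') (hττ : τ' ≤ τ) (hτ1 : τ ≤ 1)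
    (u u' : Fin n → ℝ)
    (hu : u = τ • z + Real.sqrt (1 - τ ^ 2) • w)
    (hu' : u' = τ' • z + Real.sqrt (1 - τ' ^ 2) • w) :
    ((vecMulVec u' u' - vecMulVec u u)ᵀ * (vecMulVec u' u' - vecMulVec u u)).trace
        = 2 * (1 - (u ⬝ᵥ u') ^ 2) ∧
    1 - (u ⬝ᵥ u') ^ 2 ≤ (τ - τ') ^ 2 + 2 * τ ^ 2 * τ' * (τ - τ') := by
  have hτ0 : (0:ℝ) ≤ τ := le_trans hτ'0 hττ
  have hτ'1 : τ' ≤ 1 := le_trans hττ hτ1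
  have h1 : (0:ℝ) ≤ 1 - τ ^ 2 := by nlinarith
  have h1' : (0:ℝ) ≤ 1 - τ' ^ 2 := by nlinarith
  set s := Real.sqrt (1 - τ ^ 2) with hs
  set s' := Real.sqrt (1 - τ' ^ 2) with hs'
  have hs2 : s ^ 2 = 1 - τ ^ 2 := Real.sq_sqrt h1
  have hs'2 : s' ^ 2 = 1 - τ' ^ 2 := Real.sq_sqrt h1'
  have hs0 : 0 ≤ s := Real.sqrt_nonneg _
  have hs'0 : 0 ≤ s' := Real.sqrt_nonneg _
  have hsle : s ≤ s' := Real.sqrt_le_sqrt (by nlinarith)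
  have hwz : w ⬝ᵥ z = 0 := by rw [dotProduct_comm]; exact hzw
  have huu : u ⬝ᵥ u = 1 := by
    simp only [hu, add_dotProduct, dotProduct_add, smul_dotProduct, dotProduct_smul,
      hz, hw, hzw, hwz, smul_eq_mul]
    nlinarith [hs2]
  have hu'u' : u' ⬝ᵥ u' = 1 := by
    simp only [hu', add_dotProduct, dotProduct_add, smul_dotProduct, dotProduct_smul,
      hz, hw, hzw, hwz, smul_eq_mul]
    nlinarith [hs'2]
  have huu' : u ⬝ᵥ u' = τ * τ' + s * s' := by
    simp only [hu, hu', add_dotProduct, dotProduct_add, smul_dotProduct, dotProduct_smul,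
      hz, hw, hzw, hwz, smul_eq_mul]
    ring
  constructor
  · rw [trace_aux u' u, hu'u', dotProduct_comm u' u, huu]
    ring
  · rw [huu']
    nlinarith [mul_nonneg (mul_nonneg hτ0 hτ'0) (mul_nonneg hs0 (sub_nonneg.2 hsle)), hs2, hs'2]
end

section
/- Let X* ∈ 𝒮ⁿ minimize a convex differentiable f over the spectrahedron 𝒮ⁿ, and suppose rank(X*) = r. Then the first-order optimality condition implies that λₙ(∇f(X*)) = λ_{n−r+1}(∇f(X*)); that is, the smallest eigenvalue of the gradient at an optimum of rank r has multiplicity at least r, and Im(X*) is contained in the eigenspace of ∇f(X*) corresponding to its minimal eigenvalue. -/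
/-!
Write `G = ∇f(X*)` and let `λ` be its smallest eigenvalue, with unit eigenvector `u`. Testing
optimality against `u uᵀ` gives `⟨X*, G⟩ ≤ λ`, i.e. `⟨X*, G - λ I⟩ ≤ 0` because `tr X* = 1`. Both
`X*` and `G - λ I` are positive semidefinite, so this trace vanishes, which forces
`(G - λ I) X* = 0`: the image of `X*` lies in the `λ`-eigenspace. Hence
`r = rank X* ≤ n - rank (G - λ I)`, the multiplicity of `λ`, and as the eigenvalues are sorted,
`λ_{n-r+1} = λ_n`.
-/

open Matrix

/-- The spectrahedron: real symmetric PSD matrices with unit trace. -/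
def Spectrahedron {n : ℕ} (X : Matrix (Fin n) (Fin n) ℝ) : Prop :=
  X.PosSemidef ∧ X.trace = 1

namespace Matrix.PosSemidef

open scoped ComplexOrder MatrixOrder

variable {m 𝕜 : Type*} [Fintype m] [DecidableEq m] [RCLike 𝕜] {A B : Matrix m m 𝕜}

lemma exists_eq_conjTranspose_mul_self (hA : A.PosSemidef) : ∃ P : Matrix m m 𝕜, A = Pᴴ * P :=
  CStarAlgebra.nonneg_iff_eq_star_mul_self.mp hA.nonneg

lemma trace_mul_nonneg (hA : A.PosSemidef) (hB : B.PosSemidef) : 0 ≤ (A * B).trace := by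
  obtain ⟨P, rfl⟩ := hA.exists_eq_conjTranspose_mul_self
  rw [Matrix.mul_assoc, trace_mul_comm]
  exact (hB.mul_mul_conjTranspose_same P).trace_nonneg

lemma mul_eq_zero_of_trace_mul_eq_zero (hA : A.PosSemidef) (hB : B.PosSemidef)
    (h : (A * B).trace = 0) : A * B = 0 := by
  obtain ⟨P, rfl⟩ := hA.exists_eq_conjTranspose_mul_self
  obtain ⟨Q, rfl⟩ := hB.exists_eq_conjTranspose_mul_self
  -- `tr (Pᴴ P Qᴴ Q)` is the squared Frobenius norm of `Q Pᴴ`.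
  have hQP : Q * Pᴴ = 0 := by
    rw [← trace_conjTranspose_mul_self_eq_zero_iff, ← h, conjTranspose_mul,
      conjTranspose_conjTranspose, ← Matrix.mul_assoc, trace_mul_comm]
    simp only [Matrix.mul_assoc]
  rw [Matrix.mul_assoc, ← Matrix.mul_assoc P, ← conjTranspose_conjTranspose P,
    ← conjTranspose_mul, hQP]
  simp

end Matrix.PosSemidef

lemma Antitone.val_add_one_le_card_ne {α : Type*} [LinearOrder α] {n : ℕ} {f : Fin n → α}
    (hf : Antitone f) {c : α} (hc : ∀ i, c ≤ f i) {k : Fin n} (hk : f k ≠ c) :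
    (k : ℕ) + 1 ≤ Fintype.card {i // f i ≠ c} := by
  rw [Fintype.card_subtype, ← Fin.card_Iic k]
  refine Finset.card_le_card fun i hi => Finset.mem_filter.2 ⟨Finset.mem_univ i, fun h => ?_⟩
  exact hk (le_antisymm (h ▸ hf (Finset.mem_Iic.1 hi)) (hc k))

namespace Matrix

variable {m R : Type*} [Fintype m] [DecidableEq m] {U : Matrix m m R}

lemma trace_conj_of_transpose_mul_self [CommRing R] (hU : Uᵀ * U = 1) (A : Matrix m m R) :
    (U * A * Uᵀ).trace = A.trace := by
  rw [trace_mul_comm, ← Matrix.mul_assoc, hU, Matrix.one_mul]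

lemma conj_mul_conj_of_transpose_mul_self [CommRing R] (hU : Uᵀ * U = 1) (A B : Matrix m m R) :
    U * A * Uᵀ * (U * B * Uᵀ) = U * (A * B) * Uᵀ := by
  simp only [Matrix.mul_assoc, ← Matrix.mul_assoc Uᵀ, hU, Matrix.one_mul]

lemma rank_conj_of_transpose_mul_self [Field R] (hU : Uᵀ * U = 1) (A : Matrix m m R) :
    (U * A * Uᵀ).rank = A.rank := by
  rw [rank_mul_eq_left_of_isUnit_det _ _ (isUnit_det_of_right_inverse hU),
    rank_mul_eq_right_of_isUnit_det _ _ (isUnit_det_of_left_inverse hU)]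

lemma conj_diagonal_sub_smul_one [CommRing R] (hU : Uᵀ * U = 1) (μ : m → R) (c : R) :
    U * diagonal μ * Uᵀ - c • 1 = U * diagonal (fun i => μ i - c) * Uᵀ := by
  have hU' : U * Uᵀ = 1 := mul_eq_one_comm.mp hU
  rw [← diagonal_sub μ fun _ => c, ← smul_one_eq_diagonal,
    Matrix.mul_sub, Matrix.sub_mul, mul_smul_comm, Matrix.mul_one, smul_mul_assoc, hU']

lemma posSemidef_conj_diagonal_sub_smul_one {U : Matrix m m ℝ} (hU : Uᵀ * U = 1) {μ : m → ℝ}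
    {c : ℝ} (hc : ∀ i, c ≤ μ i) : (U * diagonal μ * Uᵀ - c • 1).PosSemidef := by
  rw [conj_diagonal_sub_smul_one hU]
  simpa using (PosSemidef.diagonal fun i => sub_nonneg.2 (hc i)).mul_mul_conjTranspose_same U

lemma trace_transpose_conj_diagonal_single_mul [CommRing R] (hU : Uᵀ * U = 1) (μ : m → R)
    (i : m) : ((U * diagonal (Pi.single i 1) * Uᵀ)ᵀ * (U * diagonal μ * Uᵀ)).trace = μ i := by
  have hsymm : (U * diagonal (Pi.single i 1) * Uᵀ)ᵀ = U * diagonal (Pi.single i 1) * Uᵀ := by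
    simp [Matrix.mul_assoc]
  rw [hsymm, conj_mul_conj_of_transpose_mul_self hU, trace_conj_of_transpose_mul_self hU,
    diagonal_mul_diagonal, trace_diagonal]
  simp [Pi.single_apply]

end Matrix

namespace Spectrahedron

variable {n : ℕ}

lemma conj_diagonal_single {U : Matrix (Fin n) (Fin n) ℝ} (hU : Uᵀ * U = 1) (i : Fin n) :
    Spectrahedron (U * diagonal (Pi.single i 1) * Uᵀ) := by
  refine ⟨?_, ?_⟩
  · have hE : (diagonal (Pi.single i (1 : ℝ))).PosSemidef :=
      PosSemidef.diagonal fun j => by by_cases h : j = i <;> simp [h]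
    simpa using hE.mul_mul_conjTranspose_same U
  · simp [trace_conj_of_transpose_mul_self hU]

lemma sub_smul_one_mul_eq_zero_of_optimal {X G U : Matrix (Fin n) (Fin n) ℝ} {μ : Fin n → ℝ}
    {i : Fin n} (hX : Spectrahedron X) (hopt : ∀ Y, Spectrahedron Y → 0 ≤ ((Y - X)ᵀ * G).trace)
    (hU : Uᵀ * U = 1) (hG : G = U * diagonal μ * Uᵀ) (hmin : ∀ j, μ i ≤ μ j) :
    (G - μ i • 1) * X = 0 := by
  obtain ⟨hXpsd, hXtr⟩ := hX
  have hshift_psd : (G - μ i • 1).PosSemidef := hG ▸ posSemidef_conj_diagonal_sub_smul_one hU hmin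
  have htrace_le : (G * X).trace ≤ μ i := by
    have h := hopt _ (conj_diagonal_single hU i)
    rw [transpose_sub, Matrix.sub_mul, trace_sub, hG, trace_transpose_conj_diagonal_single_mul hU,
      ← hG, ← conjTranspose_eq_transpose_of_trivial, hXpsd.isHermitian, trace_mul_comm] at h
    linarith
  refine hshift_psd.mul_eq_zero_of_trace_mul_eq_zero hXpsd
    (le_antisymm ?_ (hshift_psd.trace_mul_nonneg hXpsd))
  rw [Matrix.sub_mul, trace_sub, smul_mul_assoc, Matrix.one_mul, trace_smul, hXtr, smul_eq_mul,
    mul_one]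
  linarith

end Spectrahedron

theorem stmt18 {n r : ℕ} (hn : 0 < n) (hr : 0 < r)
    (gradf : Matrix (Fin n) (Fin n) ℝ → Matrix (Fin n) (Fin n) ℝ)
    (Xstar : Matrix (Fin n) (Fin n) ℝ)
    (hXs : Spectrahedron Xstar) (hrank : Xstar.rank = r)
    (hopt : ∀ Y, Spectrahedron Y → 0 ≤ ((Y - Xstar)ᵀ * gradf Xstar).trace)
    (U : Matrix (Fin n) (Fin n) ℝ) (μ : Fin n → ℝ)
    (hU : Uᵀ * U = 1) (hμ : Antitone μ)
    (hG : gradf Xstar = U * Matrix.diagonal μ * Uᵀ) :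
    μ ⟨n - r, by omega⟩ = μ ⟨n - 1, by omega⟩ ∧
    ∀ v : Fin n → ℝ, (∃ w, Xstar.mulVec w = v) →
      (gradf Xstar).mulVec v = μ ⟨n - 1, by omega⟩ • v := by
  set last : Fin n := ⟨n - 1, by omega⟩
  have hmin : ∀ i, μ last ≤ μ i := fun i => hμ (Fin.le_def.2 (Nat.le_sub_one_of_lt i.isLt))
  have hkernel := hXs.sub_smul_one_mul_eq_zero_of_optimal hopt hU hG hmin
  refine ⟨by_contra fun hne => ?_, ?_⟩
  · have hrank_le := rank_add_rank_le_card_of_mul_eq_zero hkernel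
    rw [hG, conj_diagonal_sub_smul_one hU, rank_conj_of_transpose_mul_self hU, rank_diagonal,
      hrank, Fintype.card_fin] at hrank_le
    simp only [sub_ne_zero] at hrank_le
    have hcard := hμ.val_add_one_le_card_ne hmin hne
    simp only at hcard
    omega
  · rintro v ⟨w, rfl⟩
    have hGX : gradf Xstar * Xstar = μ last • Xstar := by
      rwa [Matrix.sub_mul, smul_mul_assoc, Matrix.one_mul, sub_eq_zero] at hkernel
    rw [mulVec_mulVec, hGX, smul_mulVec]
end

section
/- Let X ∈ 𝕊ⁿ be PSD with unit trace and rank(X) ≥ 2, and let v be a unit vector in Im(X). Then λ := (vᵀX†v)⁻¹ satisfies λ ≤ vᵀXv ≤ 1 − λ_r(X) < 1, where λ_r(X) is the smallest nonzero eigenvalue of X; in particular λ < 1, so the away-step matrix (1−λ)⁻¹(X − λ v vᵀ) is well defined and lies in 𝒮ⁿ. -/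
open Matrix

/-!
Put `u = X†v`; since `v ∈ Im X`, `X u = X X† X w = v`. Cauchy–Schwarz for the semi-inner product
`⟨a, b⟩ = aᵀ X b` then gives `(vᵀy)² = ⟨u, y⟩² ≤ ⟨u, u⟩ ⟨y, y⟩ = (vᵀX†v) (yᵀXy)` for every `y`.
At `y = v` this is `λ ≤ vᵀXv`; for general `y` it says `X - λ v vᵀ ⪰ 0`. On the other side,
`vᵀXv ≤ λ_max(X) ≤ 1 - λ_r(X)`, because the eigenvalues are nonnegative, sum to `tr X = 1`, and at
least two of them are nonzero.
-/

theorem le_one_sub_of_sum_eq_one {ι : Type*} [Fintype ι] {f : ι → ℝ} (hf : ∀ i, 0 ≤ f i)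
    (hsum : ∑ i, f i = 1) (hsupp : 1 < Fintype.card {i // f i ≠ 0}) {m : ℝ}
    (hm : ∀ i, f i ≠ 0 → m ≤ f i) (k : ι) : f k ≤ 1 - m := by
  rw [Fintype.card_subtype] at hsupp
  obtain ⟨j, hj, hjk⟩ := Finset.exists_mem_ne hsupp k
  have hj : f j ≠ 0 := (Finset.mem_filter.mp hj).2
  have := Finset.add_le_sum (fun i _ ↦ hf i) (Finset.mem_univ k) (Finset.mem_univ j) hjk.symm
  linarith [hm j hj]

namespace Matrix

variable {ι : Type*} [Fintype ι]

theorem PosSemidef.sq_dotProduct_mulVec_le {A : Matrix ι ι ℝ} (hA : A.PosSemidef) (x y : ι → ℝ) :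
    (x ⬝ᵥ A *ᵥ y) ^ 2 ≤ (x ⬝ᵥ A *ᵥ x) * (y ⬝ᵥ A *ᵥ y) := by
  let := A.toSeminormedAddCommGroup hA
  let := A.toInnerProductSpace hA
  have h := real_inner_mul_inner_self_le x y
  change (A *ᵥ y) ⬝ᵥ x * ((A *ᵥ y) ⬝ᵥ x) ≤ (A *ᵥ x) ⬝ᵥ x * ((A *ᵥ y) ⬝ᵥ y) at h
  simpa only [dotProduct_comm _ x, dotProduct_comm _ y, sq] using h

theorem IsHermitian.dotProduct_mulVec_comm {A : Matrix ι ι ℝ} (hA : A.IsHermitian) (x y : ι → ℝ) :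
    x ⬝ᵥ A *ᵥ y = y ⬝ᵥ A *ᵥ x := by
  rw [dotProduct_mulVec, ← mulVec_transpose, ← conjTranspose_eq_transpose_of_trivial, hA.eq,
    dotProduct_comm]

theorem PosSemidef.sq_dotProduct_le_of_mulVec_eq {A : Matrix ι ι ℝ} (hA : A.PosSemidef)
    {u v : ι → ℝ} (huv : A *ᵥ u = v) (y : ι → ℝ) :
    (v ⬝ᵥ y) ^ 2 ≤ (v ⬝ᵥ u) * (y ⬝ᵥ A *ᵥ y) := by
  have hvy : v ⬝ᵥ y = u ⬝ᵥ A *ᵥ y := by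
    rw [← huv, dotProduct_comm, hA.isHermitian.dotProduct_mulVec_comm]
  have hvu : v ⬝ᵥ u = u ⬝ᵥ A *ᵥ u := by rw [← huv, dotProduct_comm]
  rw [hvy, hvu]
  exact hA.sq_dotProduct_mulVec_le u y

theorem PosSemidef.sub_smul_vecMulVec {A : Matrix ι ι ℝ} (hA : A.PosSemidef)
    {u v : ι → ℝ} (huv : A *ᵥ u = v) : (A - (v ⬝ᵥ u)⁻¹ • vecMulVec v v).PosSemidef := by
  have hvu : 0 ≤ v ⬝ᵥ u := by
    rw [← huv, dotProduct_comm]; exact hA.dotProduct_mulVec_nonneg u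
  refine .of_dotProduct_mulVec_nonneg ?_ fun y ↦ ?_
  · have hvv : (vecMulVec v v).IsHermitian := by
      simpa using (posSemidef_vecMulVec_self_star v).isHermitian
    exact hA.isHermitian.sub (IsSelfAdjoint.smul (.all _) hvv)
  have hyAy : 0 ≤ y ⬝ᵥ A *ᵥ y := hA.dotProduct_mulVec_nonneg y
  rw [star_trivial, sub_mulVec, dotProduct_sub, smul_mulVec, dotProduct_smul, vecMulVec_mulVec,
    op_smul_eq_smul, dotProduct_smul, dotProduct_comm y v, smul_eq_mul, smul_eq_mul, ← sq,
    sub_nonneg]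
  calc (v ⬝ᵥ u)⁻¹ * (v ⬝ᵥ y) ^ 2
      ≤ (v ⬝ᵥ u)⁻¹ * ((v ⬝ᵥ u) * (y ⬝ᵥ A *ᵥ y)) :=
        mul_le_mul_of_nonneg_left (hA.sq_dotProduct_le_of_mulVec_eq huv y) (inv_nonneg.2 hvu)
    _ = ((v ⬝ᵥ u)⁻¹ * (v ⬝ᵥ u)) * (y ⬝ᵥ A *ᵥ y) := (mul_assoc ..).symm
    _ ≤ y ⬝ᵥ A *ᵥ y := mul_le_of_le_one_left hyAy inv_mul_le_one

open scoped MatrixOrder in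
theorem IsHermitian.dotProduct_mulVec_le_of_eigenvalues_le [DecidableEq ι] {A : Matrix ι ι ℝ}
    (hA : A.IsHermitian) {c : ℝ} (hc : ∀ i, hA.eigenvalues i ≤ c) (x : ι → ℝ) :
    x ⬝ᵥ A *ᵥ x ≤ c * (x ⬝ᵥ x) := by
  have hle : A ≤ algebraMap ℝ _ c := le_algebraMap_of_spectrum_le (by
    rw [hA.spectrum_real_eq_range_eigenvalues]; rintro _ ⟨i, rfl⟩; exact hc i) hA
  have := (Matrix.le_iff.mp hle).dotProduct_mulVec_nonneg x
  simp only [Algebra.algebraMap_eq_smul_one, sub_mulVec, smul_mulVec, one_mulVec, dotProduct_sub,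
    dotProduct_smul, star_trivial, smul_eq_mul] at this
  linarith

end Matrix

theorem stmt19 {n r : ℕ} (X Xd : Matrix (Fin n) (Fin n) ℝ) (v : Fin n → ℝ) (lamr : ℝ)
    (hX : X.PosSemidef) (htr : X.trace = 1) (hrank : X.rank = r) (hr : 2 ≤ r)
    (hXd : IsMoorePenroseInv X Xd)
    (hv : ∃ w, X.mulVec w = v) (hvunit : v ⬝ᵥ v = 1)
    (hlamr : IsLeast {x | x ≠ 0 ∧ ∃ i, hX.isHermitian.eigenvalues i = x} lamr) :
    (v ⬝ᵥ Xd.mulVec v)⁻¹ ≤ v ⬝ᵥ X.mulVec v ∧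
    v ⬝ᵥ X.mulVec v ≤ 1 - lamr ∧ 1 - lamr < 1 ∧
    (v ⬝ᵥ Xd.mulVec v)⁻¹ < 1 ∧
    Spectrahedron ((1 - (v ⬝ᵥ Xd.mulVec v)⁻¹)⁻¹ • (X - (v ⬝ᵥ Xd.mulVec v)⁻¹ • vecMulVec v v)) := by
  obtain ⟨w, hw⟩ := hv
  have hu : X *ᵥ (Xd *ᵥ v) = v := by rw [← hw, mulVec_mulVec, mulVec_mulVec, hXd.1]
  have hCS : 1 ≤ (v ⬝ᵥ Xd *ᵥ v) * (v ⬝ᵥ X *ᵥ v) := by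
    simpa [hvunit] using hX.sq_dotProduct_le_of_mulVec_eq hu v
  have hXd_pos : 0 < v ⬝ᵥ Xd *ᵥ v :=
    pos_of_mul_pos_left (one_pos.trans_le hCS) (hX.dotProduct_mulVec_nonneg v)
  have hlower : (v ⬝ᵥ Xd *ᵥ v)⁻¹ ≤ v ⬝ᵥ X *ᵥ v := (inv_le_iff_one_le_mul₀' hXd_pos).2 hCS
  obtain ⟨⟨hlamr0, i, rfl⟩, hlamr_le⟩ := hlamr
  have hlamr_pos : 0 < hX.isHermitian.eigenvalues i := (hX.eigenvalues_nonneg i).lt_of_ne' hlamr0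
  have heig : ∀ k, hX.isHermitian.eigenvalues k ≤ 1 - hX.isHermitian.eigenvalues i := by
    refine le_one_sub_of_sum_eq_one hX.eigenvalues_nonneg ?_ ?_ fun j hj ↦ hlamr_le ⟨hj, j, rfl⟩
    · simpa [htr] using (hX.isHermitian.trace_eq_sum_eigenvalues).symm
    · rw [← hX.isHermitian.rank_eq_card_non_zero_eigs]; omega
  have hupper : v ⬝ᵥ X *ᵥ v ≤ 1 - hX.isHermitian.eigenvalues i := by
    simpa [hvunit] using hX.isHermitian.dotProduct_mulVec_le_of_eigenvalues_le heig v
  have hden : 0 < 1 - (v ⬝ᵥ Xd *ᵥ v)⁻¹ := by linarith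
  refine ⟨hlower, hupper, by linarith, by linarith,
    (hX.sub_smul_vecMulVec hu).smul (inv_nonneg.2 hden.le), ?_⟩
  rw [trace_smul, trace_sub, trace_smul, trace_vecMulVec, htr, hvunit, smul_eq_mul, smul_eq_mul,
    mul_one, inv_mul_cancel₀ hden.ne']
end
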